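/- arXiv:2601.18029 — 2 statements merged into one kernel-verified Lean document; each statement's English description precedes it below -/
import Mathlib

section
/- Suppose N = 0, and suppose there exist a real number β and a continuous function W : [r_i, r_o] → ℝ such that r·Q'(r) = W(r)·(U(r) − β) for all r ∈ [r_i, r_o] and 0 ≤ W(r) ≤ (π/ln η)²/r_o² for all r ∈ [r_i, r_o] (the Kelvin–Arnol'd II condition for axisymmetric disturbances in an annulus). Then G(r) = 0 for all r ∈ [r_i, r_o]; that is, no nontrivial solution with Im c ≠ 0 exists. -/
/-!
Put `F = r G`. For `N = 0` the equation reads `(F'/r)' = (k² - W z) F / r` with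
`z = (U - β) / (U - c)`, so multiplying by `conj F` and integrating by parts gives
`∫ |F'|²/r + k² ∫ |F|²/r = ∫ W z |F|²/r`. The right-hand side is real, hence equal to
`∫ W (Re z - λ Im z) |F|²/r` with `λ = (Re c - β) / Im c`, and `Re z - λ Im z ≤ 1`
pointwise. So `∫ |F'|²/r + k² ∫ |F|²/r ≤ (a / r_o)² ∫ |F|²/r` with `a = π / ln (r_o / r_i)`,
while Wirtinger's inequality in the variable `ln r` gives
`a² ∫ |F|²/r ≤ ∫ r |F'|² ≤ r_o² ∫ |F'|²/r`. Together, `k² ∫ |F|²/r ≤ 0`, so `F = 0`.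
-/

open Real MeasureTheory Set Filter Topology
open scoped ComplexConjugate

lemma log_poincare_of_lt {E : Type*} [NormedAddCommGroup E] [InnerProductSpace ℝ E]
    {x y b : ℝ} (hx : 0 < x) (hxy : x ≤ y) (hb : 0 ≤ b) (hbπ : b * log (y / x) < π)
    {u u' : ℝ → E} (hu : ContinuousOn u (Icc x y)) (hu' : ContinuousOn u' (Icc x y))
    (hd : ∀ r ∈ Ioo x y, HasDerivAt u (u' r) r) (hux : u x = 0) (huy : u y = 0) :
    b ^ 2 * ∫ r in x..y, ‖u r‖ ^ 2 / r ≤ ∫ r in x..y, r * ‖u' r‖ ^ 2 := by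
  have hpos : ∀ r ∈ Icc x y, 0 < r := fun r hr => hx.trans_le hr.1
  rw [log_div (hx.trans_le hxy).ne' hx.ne'] at hbπ
  -- `θ` maps `[x, y]` into `[δ, π - δ]` with `δ > 0`, so `φ = b cot θ` is finite there;
  -- `φ' = -b² / (r sin² θ)` is what completes the square in `hbound` (Picone's identity).
  set θ : ℝ → ℝ := fun r => b * (log r - log x) + (π - b * (log y - log x)) / 2
  have hsin : ∀ r ∈ Icc x y, 0 < sin (θ r) := by
    intro r hr
    have h1 : log x ≤ log r := log_le_log hx hr.1
    have h2 : log r ≤ log y := log_le_log (hpos r hr) hr.2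
    apply sin_pos_of_pos_of_lt_pi <;> simp only [θ] <;> nlinarith
  set φ : ℝ → ℝ := fun r => b * cos (θ r) / sin (θ r)
  have hφ : ∀ r ∈ Ioo x y, HasDerivAt φ (-(b ^ 2 / (r * sin (θ r) ^ 2))) r := by
    intro r hr
    have hr0 := hpos r (Ioo_subset_Icc_self hr)
    have hθ : HasDerivAt θ (b / r) r :=
      ((((hasDerivAt_log hr0.ne').sub_const (log x)).const_mul b).add_const _).congr_deriv
        (div_eq_mul_inv b r).symm
    have hs := (hsin r (Ioo_subset_Icc_self hr)).ne'
    refine ((((hasDerivAt_cos (θ r)).comp r hθ).const_mul b).div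
      ((hasDerivAt_sin (θ r)).comp r hθ) hs).congr_deriv ?_
    simp only [Function.comp_apply]
    field_simp
    linear_combination (-b ^ 2) * (sin_sq_add_cos_sq (θ r))
  have hbound : ∀ r ∈ Ioo x y,
      -(b ^ 2 / (r * sin (θ r) ^ 2)) * ‖u r‖ ^ 2 + φ r * (2 * inner ℝ (u r) (u' r))
        ≤ r * ‖u' r‖ ^ 2 - b ^ 2 * (‖u r‖ ^ 2 / r) := by
    intro r hr
    have hr0 := hpos r (Ioo_subset_Icc_self hr)
    have hs := (hsin r (Ioo_subset_Icc_self hr)).ne'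
    have hsq : 0 ≤ r * ‖u' r - (φ r / r) • u r‖ ^ 2 := by positivity
    rw [norm_sub_sq_real, norm_smul, inner_smul_right, real_inner_comm, mul_pow,
      Real.norm_eq_abs, sq_abs] at hsq
    have hφ2 : φ r ^ 2 = b ^ 2 / sin (θ r) ^ 2 - b ^ 2 := by
      simp only [φ]
      field_simp
      linear_combination b ^ 2 * (sin_sq_add_cos_sq (θ r))
    rw [div_pow, hφ2] at hsq
    have hid : r * (‖u' r‖ ^ 2 - 2 * (φ r / r * inner ℝ (u r) (u' r))
        + (b ^ 2 / sin (θ r) ^ 2 - b ^ 2) / r ^ 2 * ‖u r‖ ^ 2)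
        = r * ‖u' r‖ ^ 2 - b ^ 2 * (‖u r‖ ^ 2 / r)
          - (-(b ^ 2 / (r * sin (θ r) ^ 2)) * ‖u r‖ ^ 2
            + φ r * (2 * inner ℝ (u r) (u' r))) := by
      field_simp
      ring
    linarith
  have hφc : ContinuousOn φ (Icc x y) := by
    have hθc : ContinuousOn θ (Icc x y) := by
      fun_prop (disch := exact fun r hr => (hpos r hr).ne')
    exact (continuous_cos.comp_continuousOn hθc |>.const_smul b).div
      (continuous_sin.comp_continuousOn hθc) fun r hr => (hsin r hr).ne'
  have hA : ContinuousOn (fun r => r * ‖u' r‖ ^ 2) (Icc x y) :=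
    continuousOn_id.mul (hu'.norm.pow 2)
  have hB : ContinuousOn (fun r => ‖u r‖ ^ 2 / r) (Icc x y) :=
    (hu.norm.pow 2).div continuousOn_id fun r hr => (hpos r hr).ne'
  have hftc := intervalIntegral.sub_le_integral_of_hasDeriv_right_of_le hxy
    (g := fun r => φ r * ‖u r‖ ^ 2)
    (φ := fun r => r * ‖u' r‖ ^ 2 - b ^ 2 * (‖u r‖ ^ 2 / r))
    (hφc.mul (hu.norm.pow 2))
    (fun r hr => ((hφ r hr).mul (hd r hr).norm_sq).hasDerivWithinAt)
    (hA.sub (hB.const_smul (b ^ 2))).integrableOn_Icc hbound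
  rw [intervalIntegral.integral_sub (hA.intervalIntegrable_of_Icc hxy)
    ((hB.intervalIntegrable_of_Icc hxy).const_mul _), intervalIntegral.integral_const_mul] at hftc
  simp only [hux, huy, norm_zero] at hftc
  linarith

lemma log_poincare {E : Type*} [NormedAddCommGroup E] [InnerProductSpace ℝ E]
    {x y : ℝ} (hx : 0 < x) (hxy : x < y)
    {u u' : ℝ → E} (hu : ContinuousOn u (Icc x y)) (hu' : ContinuousOn u' (Icc x y))
    (hd : ∀ r ∈ Ioo x y, HasDerivAt u (u' r) r) (hux : u x = 0) (huy : u y = 0) :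
    (π / log (y / x)) ^ 2 * ∫ r in x..y, ‖u r‖ ^ 2 / r ≤ ∫ r in x..y, r * ‖u' r‖ ^ 2 := by
  have hL : 0 < log (y / x) := log_pos ((one_lt_div hx).2 hxy)
  have hlim : Tendsto (fun b : ℝ => b ^ 2 * ∫ r in x..y, ‖u r‖ ^ 2 / r)
      (𝓝[<] (π / log (y / x))) (𝓝 ((π / log (y / x)) ^ 2 * ∫ r in x..y, ‖u r‖ ^ 2 / r)) :=
    ((continuous_pow 2).mul continuous_const).tendsto _ |>.mono_left nhdsWithin_le_nhds
  refine le_of_tendsto hlim ?_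
  filter_upwards [Ioo_mem_nhdsLT (div_pos pi_pos hL)] with b hb
  exact log_poincare_of_lt hx hxy.le hb.1.le ((lt_div_iff₀ hL).1 hb.2) hu hu' hd hux huy

lemma log_poincare_div {E : Type*} [NormedAddCommGroup E] [InnerProductSpace ℝ E]
    {x y : ℝ} (hx : 0 < x) (hxy : x < y)
    {u u' : ℝ → E} (hu : ContinuousOn u (Icc x y)) (hu' : ContinuousOn u' (Icc x y))
    (hd : ∀ r ∈ Ioo x y, HasDerivAt u (u' r) r) (hux : u x = 0) (huy : u y = 0) :
    (π / log (y / x)) ^ 2 * ∫ r in x..y, ‖u r‖ ^ 2 / r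
      ≤ y ^ 2 * ∫ r in x..y, ‖u' r‖ ^ 2 / r := by
  have hpos : ∀ r ∈ Icc x y, 0 < r := fun r hr => hx.trans_le hr.1
  refine (log_poincare hx hxy hu hu' hd hux huy).trans ?_
  rw [← intervalIntegral.integral_const_mul]
  refine intervalIntegral.integral_mono_on hxy.le
    ((continuousOn_id.mul (hu'.norm.pow 2)).intervalIntegrable_of_Icc hxy.le)
    ((((hu'.norm.pow 2).div continuousOn_id fun r hr => (hpos r hr).ne').const_smul
      (y ^ 2)).intervalIntegrable_of_Icc hxy.le) fun r hr => ?_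
  have hr0 := hpos r hr
  rw [mul_div_assoc', le_div_iff₀ hr0]
  have : r * r ≤ y ^ 2 := by nlinarith [hr.2]
  nlinarith [sq_nonneg ‖u' r‖]

lemma hasDerivAt_derivWithin_Icc {E : Type*} [NormedAddCommGroup E] [NormedSpace ℝ E]
    {a b r : ℝ} {F : ℝ → E} {n : WithTop ℕ∞}
    (hF : ContDiffOn ℝ n F (Icc a b)) (hn : n ≠ 0) (hr : r ∈ Ioo a b) :
    HasDerivAt F (derivWithin F (Icc a b) r) r :=
  ((hF.differentiableOn hn) r (Ioo_subset_Icc_self hr)).hasDerivWithinAt.hasDerivAt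
    (Icc_mem_nhds hr.1 hr.2)

lemma integral_energy_eq_zero {a b : ℝ} (hab : a < b) {F p V : ℝ → ℂ}
    (hF : ContDiffOn ℝ 2 F (Icc a b)) (hpc : ContinuousOn p (Icc a b))
    (hpd : ∀ r ∈ Ioo a b, DifferentiableAt ℝ p r) (hV : ContinuousOn V (Icc a b))
    (hFV : ∀ r ∈ Ioo a b, deriv (fun s => p s * deriv F s) r = V r * F r)
    (ha : F a = 0) (hb : F b = 0) :
    ∫ r in a..b, p r * (‖derivWithin F (Icc a b) r‖ : ℂ) ^ 2 + V r * (‖F r‖ : ℂ) ^ 2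
      = 0 := by
  set D := derivWithin F (Icc a b)
  have hD : ContDiffOn ℝ 1 D (Icc a b) := hF.derivWithin (uniqueDiffOn_Icc hab) le_rfl
  have hFD : ∀ r ∈ Ioo a b, HasDerivAt F (D r) r := fun r hr =>
    hasDerivAt_derivWithin_Icc hF two_ne_zero hr
  have hflux : ∀ r ∈ Ioo a b, HasDerivAt (fun s => p s * D s) (V r * F r) r := by
    intro r hr
    have hDF : (fun s => p s * D s) =ᶠ[𝓝 r] fun s => p s * deriv F s := by
      filter_upwards [isOpen_Ioo.mem_nhds hr] with s hs
      rw [(hFD s hs).deriv]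
    have hdiff : DifferentiableAt ℝ (fun s => p s * D s) r :=
      (hpd r hr).mul (hasDerivAt_derivWithin_Icc hD one_ne_zero hr).differentiableAt
    exact hdiff.hasDerivAt.congr_deriv (by rw [hDF.deriv_eq, hFV r hr])
  have hFTC := intervalIntegral.integral_eq_sub_of_hasDerivAt_of_le hab.le
    (f := fun r => p r * D r * conj (F r))
    ((hpc.mul hD.continuousOn).mul (Complex.continuous_conj.comp_continuousOn hF.continuousOn))
    (fun r hr => (hflux r hr).mul (hFD r hr).star) ?_
  · simp only [ha, hb, map_zero, mul_zero, sub_zero] at hFTC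
    rw [← hFTC]
    refine intervalIntegral.integral_congr fun r _ => ?_
    rw [Complex.star_def, mul_assoc, mul_assoc, Complex.mul_conj', Complex.mul_conj', add_comm]
  · have hFc := hF.continuousOn
    have hDc := hD.continuousOn
    exact ContinuousOn.intervalIntegrable_of_Icc hab.le (by fun_prop)

lemma re_sub_mul_im_div_sub_le_one (u β : ℝ) {c : ℂ} (hc : c.im ≠ 0) :
    (((u : ℂ) - β) / (u - c)).re - (c.re - β) / c.im * (((u : ℂ) - β) / (u - c)).im
      ≤ 1 := by
  have hn : 0 < (u - c.re) ^ 2 + c.im ^ 2 := by positivity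
  have key : (((u : ℂ) - β) / (u - c)).re - (c.re - β) / c.im * (((u : ℂ) - β) / (u - c)).im
      = 1 - ((c.re - β) ^ 2 + c.im ^ 2) / ((u - c.re) ^ 2 + c.im ^ 2) := by
    simp only [Complex.div_re, Complex.div_im, Complex.normSq_apply, Complex.sub_re,
      Complex.sub_im, Complex.ofReal_re, Complex.ofReal_im]
    field_simp
    ring
  rw [key, sub_le_self_iff]
  positivity

lemma integral_le_of_integral_sub_mul_eq_zero {a b C l : ℝ} (hab : a ≤ b) {X Y W : ℝ → ℝ}
    {z : ℝ → ℂ} (hX : ContinuousOn X (Icc a b)) (hY : ContinuousOn Y (Icc a b))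
    (hW : ContinuousOn W (Icc a b)) (hz : ContinuousOn z (Icc a b))
    (h : ∫ r in a..b, (Y r : ℂ) - W r * X r * z r = 0)
    (hzl : ∀ r ∈ Icc a b, (z r).re - l * (z r).im ≤ 1) (hX0 : ∀ r ∈ Icc a b, 0 ≤ X r)
    (hW0 : ∀ r ∈ Icc a b, 0 ≤ W r) (hWC : ∀ r ∈ Icc a b, W r ≤ C) :
    ∫ r in a..b, Y r ≤ C * ∫ r in a..b, X r := by
  set f : ℝ → ℂ := fun r => (Y r : ℂ) - W r * X r * z r
  have hf : ContinuousOn f (Icc a b) := by fun_prop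
  have hfi : IntervalIntegrable f volume a b := hf.intervalIntegrable_of_Icc hab
  have hre := intervalIntegral.intervalIntegral_re hfi
  have him := intervalIntegral.intervalIntegral_im hfi
  rw [h] at hre him
  simp only [RCLike.re_to_complex, RCLike.im_to_complex, map_zero] at hre him
  have hfre : ContinuousOn (fun r => (f r).re) (Icc a b) :=
    Complex.continuous_re.comp_continuousOn hf
  have hfim : ContinuousOn (fun r => (f r).im) (Icc a b) :=
    Complex.continuous_im.comp_continuousOn hf
  -- take `Re - l * Im` of the vanishing integral; pointwise `W X (Re z - l Im z) ≤ W X ≤ C X`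
  have hmono : ∫ r in a..b, Y r - C * X r ≤ ∫ r in a..b, (f r).re - l * (f r).im := by
    refine intervalIntegral.integral_mono_on hab ?_ ?_ fun r hr => ?_
    · exact (hY.sub (hX.const_smul C)).intervalIntegrable_of_Icc hab
    · exact (hfre.sub (hfim.const_smul l)).intervalIntegrable_of_Icc hab
    · have hWX : W r * X r * ((z r).re - l * (z r).im) ≤ C * X r :=
        calc W r * X r * ((z r).re - l * (z r).im) ≤ W r * X r :=
              mul_le_of_le_one_right (mul_nonneg (hW0 r hr) (hX0 r hr)) (hzl r hr)
          _ ≤ C * X r := mul_le_mul_of_nonneg_right (hWC r hr) (hX0 r hr)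
      simp only [f, Complex.sub_re, Complex.sub_im, Complex.ofReal_re, Complex.ofReal_im,
        Complex.mul_re, Complex.mul_im]
      nlinarith
  rw [intervalIntegral.integral_sub (hY.intervalIntegrable_of_Icc hab)
      ((hX.intervalIntegrable_of_Icc hab).const_mul C),
    intervalIntegral.integral_sub (hfre.intervalIntegrable_of_Icc hab)
      ((hfim.intervalIntegrable_of_Icc hab).const_mul l),
    intervalIntegral.integral_const_mul, intervalIntegral.integral_const_mul, hre, him] at hmono
  linarith

lemma ofReal_sub_ne_zero (u : ℝ) {c : ℂ} (hc : c.im ≠ 0) : (u : ℂ) - c ≠ 0 := fun h =>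
  hc (by simpa using congrArg Complex.im h)

lemma continuousOn_ofReal_sub_div_ofReal_sub {s : Set ℝ} {U : ℝ → ℝ} (hU : ContinuousOn U s)
    (β : ℝ) {c : ℂ} (hc : c.im ≠ 0) :
    ContinuousOn (fun r => ((U r : ℂ) - β) / (U r - c)) s := by
  have hUC := Complex.continuous_ofReal.comp_continuousOn hU
  exact (hUC.sub continuousOn_const).div (hUC.sub continuousOn_const) fun r _ =>
    ofReal_sub_ne_zero (U r) hc

lemma eqOn_zero_of_integral_nonpos {a b : ℝ} (hab : a < b) {f : ℝ → ℝ}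
    (hf : ContinuousOn f (Icc a b)) (hf0 : ∀ x ∈ Icc a b, 0 ≤ f x) (h : ∫ x in a..b, f x ≤ 0) :
    ∀ x ∈ Icc a b, f x = 0 := fun x hx =>
  (hf0 x hx).antisymm' <| not_lt.1 fun hlt =>
    (intervalIntegral.integral_pos hab hf (fun y hy => hf0 y (Ioc_subset_Icc_self hy))
      ⟨x, hx, hlt⟩).not_ge h

section Rayleigh

variable {ri ro N k β C : ℝ} {c : ℂ} {U q W : ℝ → ℝ} {G : ℝ → ℂ}

lemma rayleigh_energy_identity
    (hri : 0 < ri) (hio : ri < ro) (hc : c.im ≠ 0) (hU : ContinuousOn U (Icc ri ro))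
    (hW : ContinuousOn W (Icc ri ro)) (hG : ContDiffOn ℝ 2 G (Icc ri ro))
    (hGi : G ri = 0) (hGo : G ro = 0)
    (heq : ∀ r ∈ Icc ri ro,
      deriv (fun s : ℝ => ((s / (N ^ 2 + s ^ 2) : ℝ) : ℂ) *
          deriv (fun t : ℝ => (t : ℂ) * G t) s) r
        - (k : ℂ) ^ 2 * G r + (q r : ℂ) / ((U r : ℂ) - c) * ((r : ℂ) * G r) = 0)
    (hWq : ∀ r ∈ Icc ri ro, r * q r = W r * (U r - β)) :
    ∫ r in ri..ro, ((r / (N ^ 2 + r ^ 2) *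
          ‖derivWithin (fun t : ℝ => (t : ℂ) * G t) (Icc ri ro) r‖ ^ 2
        + k ^ 2 * (‖(r : ℂ) * G r‖ ^ 2 / r) : ℝ) : ℂ)
      - (W r : ℂ) * ((‖(r : ℂ) * G r‖ ^ 2 / r : ℝ) : ℂ) * (((U r : ℂ) - β) / (U r - c))
      = 0 := by
  have hpos : ∀ r ∈ Icc ri ro, 0 < r := fun r hr => hri.trans_le hr.1
  have hr0 : ∀ r ∈ Icc ri ro, (r : ℂ) ≠ 0 := fun r hr =>
    Complex.ofReal_ne_zero.2 (hpos r hr).ne'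
  have hN : ∀ r ∈ Icc ri ro, N ^ 2 + r ^ 2 ≠ 0 := fun r hr => by have := hpos r hr; positivity
  set V : ℝ → ℂ := fun r => (k ^ 2 - W r * (((U r : ℂ) - β) / (U r - c))) / r
  have hV : ContinuousOn V (Icc ri ro) :=
    (continuousOn_const.sub ((Complex.continuous_ofReal.comp_continuousOn hW).mul
      (continuousOn_ofReal_sub_div_ofReal_sub hU β hc))).div
      Complex.continuous_ofReal.continuousOn hr0
  have hFV : ∀ r ∈ Ioo ri ro, deriv (fun s : ℝ => ((s / (N ^ 2 + s ^ 2) : ℝ) : ℂ) *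
      deriv (fun t : ℝ => (t : ℂ) * G t) s) r = V r * ((r : ℂ) * G r) := by
    intro r hr
    have hr0 := hr0 r (Ioo_subset_Icc_self hr)
    have hUc := ofReal_sub_ne_zero (U r) hc
    have hq : (q r : ℂ) = W r * (U r - β) / r := by
      rw [eq_div_iff hr0, mul_comm]
      exact_mod_cast hWq r (Ioo_subset_Icc_self hr)
    have h := heq r (Ioo_subset_Icc_self hr)
    rw [hq] at h
    simp only [V]
    field_simp at h ⊢
    linear_combination h
  have hpd : ∀ r ∈ Ioo ri ro,
      DifferentiableAt ℝ (fun s : ℝ => ((s / (N ^ 2 + s ^ 2) : ℝ) : ℂ)) r := fun r hr =>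
    (DifferentiableAt.hasDerivAt (f := fun s : ℝ => s / (N ^ 2 + s ^ 2))
      (by fun_prop (disch := exact hN r (Ioo_subset_Icc_self hr)))).ofReal_comp.differentiableAt
  have hF : ContDiffOn ℝ 2 (fun t : ℝ => (t : ℂ) * G t) (Icc ri ro) :=
    Complex.ofRealCLM.contDiff.contDiffOn.mul hG
  rw [← integral_energy_eq_zero hio hF (p := fun s : ℝ => ((s / (N ^ 2 + s ^ 2) : ℝ) : ℂ))
    (Complex.continuous_ofReal.comp_continuousOn (continuousOn_id.div (by fun_prop) hN))
    hpd hV hFV (by simp [hGi]) (by simp [hGo])]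
  refine intervalIntegral.integral_congr fun r hr => ?_
  have hr0 := hr0 r (by rwa [uIcc_of_le hio.le] at hr)
  simp only [V]
  push_cast
  field_simp
  ring

lemma rayleigh_integral_le
    (hri : 0 < ri) (hio : ri < ro) (hc : c.im ≠ 0) (hU : ContinuousOn U (Icc ri ro))
    (hW : ContinuousOn W (Icc ri ro)) (hG : ContDiffOn ℝ 2 G (Icc ri ro))
    (hGi : G ri = 0) (hGo : G ro = 0)
    (heq : ∀ r ∈ Icc ri ro,
      deriv (fun s : ℝ => ((s / (N ^ 2 + s ^ 2) : ℝ) : ℂ) *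
          deriv (fun t : ℝ => (t : ℂ) * G t) s) r
        - (k : ℂ) ^ 2 * G r + (q r : ℂ) / ((U r : ℂ) - c) * ((r : ℂ) * G r) = 0)
    (hWq : ∀ r ∈ Icc ri ro, r * q r = W r * (U r - β))
    (hW0 : ∀ r ∈ Icc ri ro, 0 ≤ W r) (hWC : ∀ r ∈ Icc ri ro, W r ≤ C) :
    (∫ r in ri..ro, r / (N ^ 2 + r ^ 2) *
        ‖derivWithin (fun t : ℝ => (t : ℂ) * G t) (Icc ri ro) r‖ ^ 2)
      + k ^ 2 * ∫ r in ri..ro, ‖(r : ℂ) * G r‖ ^ 2 / r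
      ≤ C * ∫ r in ri..ro, ‖(r : ℂ) * G r‖ ^ 2 / r := by
  have hpos : ∀ r ∈ Icc ri ro, 0 < r := fun r hr => hri.trans_le hr.1
  have hF : ContDiffOn ℝ 2 (fun t : ℝ => (t : ℂ) * G t) (Icc ri ro) :=
    Complex.ofRealCLM.contDiff.contDiffOn.mul hG
  have hX : ContinuousOn (fun r : ℝ => ‖(r : ℂ) * G r‖ ^ 2 / r) (Icc ri ro) :=
    (hF.continuousOn.norm.pow 2).div continuousOn_id fun r hr => (hpos r hr).ne'
  have hT : ContinuousOn (fun r : ℝ => r / (N ^ 2 + r ^ 2) *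
      ‖derivWithin (fun t : ℝ => (t : ℂ) * G t) (Icc ri ro) r‖ ^ 2) (Icc ri ro) :=
    (continuousOn_id.div (by fun_prop) fun r hr => by have := hpos r hr; positivity).mul
      ((hF.continuousOn_derivWithin (uniqueDiffOn_Icc hio) one_le_two).norm.pow 2)
  have h := integral_le_of_integral_sub_mul_eq_zero hio.le hX (hT.add (continuousOn_const.mul hX))
    (Y := fun r => r / (N ^ 2 + r ^ 2) *
      ‖derivWithin (fun t : ℝ => (t : ℂ) * G t) (Icc ri ro) r‖ ^ 2
        + k ^ 2 * (‖(r : ℂ) * G r‖ ^ 2 / r))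
    hW (continuousOn_ofReal_sub_div_ofReal_sub hU β hc)
    (rayleigh_energy_identity hri hio hc hU hW hG hGi hGo heq hWq)
    (fun r _ => re_sub_mul_im_div_sub_le_one (U r) β hc)
    (fun r hr => div_nonneg (sq_nonneg _) (hpos r hr).le) hW0 hWC
  rwa [intervalIntegral.integral_add (hT.intervalIntegrable_of_Icc hio.le)
    ((hX.intervalIntegrable_of_Icc hio.le).const_mul _),
    intervalIntegral.integral_const_mul] at h

end Rayleigh

theorem stmt_2_general
    (ri ro : ℝ) (hri : 0 < ri) (hio : ri < ro)
    (N k : ℝ) (hN : N = 0) (hk : 0 < k)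
    (c : ℂ) (hc : c.im ≠ 0)
    (U Q : ℝ → ℝ)
    (hU : ContDiffOn ℝ 2 U (Set.Icc ri ro))
    (G : ℝ → ℂ)
    (hG : ContDiffOn ℝ 2 G (Set.Icc ri ro))
    (hGi : G ri = 0) (hGo : G ro = 0)
    (heq : ∀ r ∈ Set.Icc ri ro,
      deriv (fun s : ℝ => ((s / (N ^ 2 + s ^ 2) : ℝ) : ℂ) *
          deriv (fun t : ℝ => (t : ℂ) * G t) s) r
        - (k : ℂ) ^ 2 * G r
        + ((deriv Q r : ℝ) : ℂ) / ((U r : ℂ) - c) * ((r : ℂ) * G r) = 0)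
    (β : ℝ) (W : ℝ → ℝ)
    (hWc : ContinuousOn W (Set.Icc ri ro))
    (hWQ : ∀ r ∈ Set.Icc ri ro, r * deriv Q r = W r * (U r - β))
    (hWlo : ∀ r ∈ Set.Icc ri ro, 0 ≤ W r)
    (hWhi : ∀ r ∈ Set.Icc ri ro,
      W r ≤ (Real.pi / Real.log (ri / ro)) ^ 2 / ro ^ 2) :
    ∀ r ∈ Set.Icc ri ro, G r = 0 := by
  subst hN
  rw [show log (ri / ro) = -log (ro / ri) by rw [← log_inv, inv_div], div_neg, neg_sq] at hWhi
  have hKA := rayleigh_integral_le hri hio hc hU.continuousOn hWc hG hGi hGo heq hWQ hWlo hWhi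
  have hpos : ∀ r ∈ Icc ri ro, 0 < r := fun r hr => hri.trans_le hr.1
  have hF : ContDiffOn ℝ 2 (fun t : ℝ => (t : ℂ) * G t) (Icc ri ro) :=
    Complex.ofRealCLM.contDiff.contDiffOn.mul hG
  have hP := log_poincare_div hri hio hF.continuousOn
    (hF.continuousOn_derivWithin (uniqueDiffOn_Icc hio) one_le_two)
    (fun r hr => hasDerivAt_derivWithin_Icc hF two_ne_zero hr) (by simp [hGi]) (by simp [hGo])
  set D := derivWithin (fun t : ℝ => (t : ℂ) * G t) (Icc ri ro)
  have hT : ∫ r in ri..ro, r / (0 ^ 2 + r ^ 2) * ‖D r‖ ^ 2 = ∫ r in ri..ro, ‖D r‖ ^ 2 / r :=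
    intervalIntegral.integral_congr fun r hr => by
      have := (hpos r (by rwa [uIcc_of_le hio.le] at hr)).ne'
      field_simp
      ring
  rw [hT] at hKA
  have hXint : ∫ r in ri..ro, ‖(r : ℂ) * G r‖ ^ 2 / r ≤ 0 := by
    rw [div_mul_eq_mul_div, le_div_iff₀ (pow_pos (hri.trans hio) 2)] at hKA
    nlinarith [mul_pos (pow_pos hk 2) (pow_pos (hri.trans hio) 2)]
  intro r hr
  simpa [(hpos r hr).ne'] using eqOn_zero_of_integral_nonpos hio
    ((hF.continuousOn.norm.pow 2).div continuousOn_id fun r hr => (hpos r hr).ne')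
    (fun r hr => div_nonneg (sq_nonneg _) (hpos r hr).le) hXint r hr

/-- Kelvin–Arnol'd II sufficient condition for stability of axisymmetric base
flows in an annulus, axisymmetric case (`N = 0`): if there exist `β` and a
continuous `W` with `r Q'(r) = W(r)(U(r) - β)` and `0 ≤ W ≤ (π/ln η)²/ro²`
on `[ri, ro]`, then the Rayleigh-type equation has no nontrivial solution
with `Im c ≠ 0`. -/
theorem stmt_2
    (ri ro : ℝ) (hri : 0 < ri) (hio : ri < ro)
    (N k : ℝ) (hN : N = 0) (hk : 0 < k)
    (c : ℂ) (hc : c.im ≠ 0)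
    (U Q : ℝ → ℝ)
    (hU : ContDiffOn ℝ 2 U (Set.Icc ri ro))
    (hQ : ∀ r, Q r = -(r * deriv U r) / (N ^ 2 + r ^ 2))
    (G : ℝ → ℂ)
    (hG : ContDiffOn ℝ 2 G (Set.Icc ri ro))
    (hGi : G ri = 0) (hGo : G ro = 0)
    (heq : ∀ r ∈ Set.Icc ri ro,
      deriv (fun s : ℝ => ((s / (N ^ 2 + s ^ 2) : ℝ) : ℂ) *
          deriv (fun t : ℝ => (t : ℂ) * G t) s) r
        - (k : ℂ) ^ 2 * G r
        + ((deriv Q r : ℝ) : ℂ) / ((U r : ℂ) - c) * ((r : ℂ) * G r) = 0)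
    (β : ℝ) (W : ℝ → ℝ)
    (hWc : ContinuousOn W (Set.Icc ri ro))
    (hWQ : ∀ r ∈ Set.Icc ri ro, r * deriv Q r = W r * (U r - β))
    (hWlo : ∀ r ∈ Set.Icc ri ro, 0 ≤ W r)
    (hWhi : ∀ r ∈ Set.Icc ri ro,
      W r ≤ (Real.pi / Real.log (ri / ro)) ^ 2 / ro ^ 2) :
    ∀ r ∈ Set.Icc ri ro, G r = 0 :=
  stmt_2_general ri ro hri hio N k hN hk c hc U Q hU G hG hGi hGo heq β W hWc hWQ hWlo hWhi
end

section
/- For every real number α, the following combined integral identity holds: ∫_{r_i}^{r_o} [ (r/(N² + r²))·|(r G(r))'|² + (k²/r)·|r G(r)|² − (Q'(r)·(U(r) − α)/|U(r) − c|²)·|r G(r)|² ] dr = 0, where (r G(r))' = G(r) + r G'(r). -/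
/-!
Multiply the equation by the conjugate of `F = r G` and integrate by parts: since `F` vanishes at
both ends, `∫ (A F')' F̄ + A F' F̄' = 0` with `A = r / (N² + r²)`. Both the real and the imaginary
part of this complex identity vanish, and the claimed integrand is `Re - ((α - Re c) / Im c) Im`
of its integrand, because `Re (q / (u - c)) - ((α - Re c) / Im c) Im (q / (u - c))` equals
`q (u - α) / |u - c|²`.
-/

open Complex ComplexConjugate Set Filter Topology

section IntervalCalculus

variable {E : Type*} [NormedAddCommGroup E] [NormedSpace ℝ E] {a b x : ℝ} {f : ℝ → E}

theorem derivWithin_Icc_eventuallyEq_deriv (hx : x ∈ Ioo a b) :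
    derivWithin f (Icc a b) =ᶠ[𝓝 x] deriv f := by
  filter_upwards [Ioo_mem_nhds hx.1 hx.2] with y hy
  exact derivWithin_of_mem_nhds (Icc_mem_nhds hy.1 hy.2)

theorem ContDiffOn.hasDerivAt_derivWithin_Icc {n : WithTop ℕ∞} (hf : ContDiffOn ℝ n f (Icc a b))
    (hn : n ≠ 0) (hx : x ∈ Ioo a b) : HasDerivAt f (derivWithin f (Icc a b) x) x := by
  have hnx : Icc a b ∈ 𝓝 x := Icc_mem_nhds hx.1 hx.2
  rw [derivWithin_of_mem_nhds hnx]
  exact ((hf.differentiableOn hn x (Ioo_subset_Icc_self hx)).differentiableAt hnx).hasDerivAt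

end IntervalCalculus

section ConjugateProduct

variable {a b : ℝ} {u v : ℝ → ℂ}

theorem continuousOn_derivWithin_mul_conj_add_mul_conj_derivWithin (hab : a < b)
    (hu : ContDiffOn ℝ 1 u (Icc a b)) (hv : ContDiffOn ℝ 1 v (Icc a b)) :
    ContinuousOn (fun x => derivWithin u (Icc a b) x * conj (v x)
      + u x * conj (derivWithin v (Icc a b) x)) (Icc a b) := by
  have hs : UniqueDiffOn ℝ (Icc a b) := uniqueDiffOn_Icc hab
  have hconj {w : ℝ → ℂ} (hw : ContinuousOn w (Icc a b)) : ContinuousOn (conj ∘ w) (Icc a b) :=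
    Complex.continuous_conj.comp_continuousOn hw
  exact ((hu.continuousOn_derivWithin hs le_rfl).mul (hconj hv.continuousOn)).add
    (hu.continuousOn.mul (hconj (hv.continuousOn_derivWithin hs le_rfl)))

theorem integral_derivWithin_mul_conj_add_mul_conj_derivWithin_eq_zero (hab : a < b)
    (hu : ContDiffOn ℝ 1 u (Icc a b)) (hv : ContDiffOn ℝ 1 v (Icc a b))
    (hva : v a = 0) (hvb : v b = 0) :
    ∫ x in a..b, derivWithin u (Icc a b) x * conj (v x) + u x * conj (derivWithin v (Icc a b) x)
      = 0 := by
  have hderiv : ∀ x ∈ Ioo a b, HasDerivAt (fun x => u x * conj (v x))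
      (derivWithin u (Icc a b) x * conj (v x) + u x * conj (derivWithin v (Icc a b) x)) x :=
    fun x hx => (hu.hasDerivAt_derivWithin_Icc one_ne_zero hx).mul
      (hv.hasDerivAt_derivWithin_Icc one_ne_zero hx).star
  rw [intervalIntegral.integral_eq_sub_of_hasDerivAt_of_le hab.le
    (hu.continuousOn.mul (Complex.continuous_conj.comp_continuousOn hv.continuousOn)) hderiv]
  · simp [hva, hvb]
  · refine ContinuousOn.intervalIntegrable ?_
    rw [uIcc_of_le hab.le]
    exact continuousOn_derivWithin_mul_conj_add_mul_conj_derivWithin hab hu hv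

end ConjugateProduct

theorem re_sub_mul_im_ofReal_div_sub (q u α : ℝ) {c : ℂ} (hc : c.im ≠ 0) :
    ((q : ℂ) / (u - c)).re - (α - c.re) / c.im * ((q : ℂ) / (u - c)).im
      = q * (u - α) / ‖(u : ℂ) - c‖ ^ 2 := by
  have hw : normSq ((u : ℂ) - c) ≠ 0 :=
    normSq_eq_zero.not.2 fun h => hc (by simpa using congrArg im h)
  rw [Complex.sq_norm, div_re, div_im]
  simp only [ofReal_re, ofReal_im, sub_re, sub_im]
  field_simp
  ring

theorem energy_integrand_eq_re_sub_mul_im (k a q u x α : ℝ) (g f : ℂ) {c : ℂ} (hc : c.im ≠ 0) :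
    let z := ((k : ℂ) ^ 2 * g - q / (u - c) * (x * g)) * conj (x * g) + a * f * conj f
    a * ‖f‖ ^ 2 + k ^ 2 / x * ‖(x : ℂ) * g‖ ^ 2
        - q * (u - α) / ‖(u : ℂ) - c‖ ^ 2 * ‖(x : ℂ) * g‖ ^ 2
      = z.re - (α - c.re) / c.im * z.im := by
  intro z
  have hxg : ‖(x : ℂ) * g‖ ^ 2 = x ^ 2 * ‖g‖ ^ 2 := by
    rw [norm_mul, norm_real, Real.norm_eq_abs, mul_pow, sq_abs]
  have hk : k ^ 2 / x * (x ^ 2 * ‖g‖ ^ 2) = k ^ 2 * x * ‖g‖ ^ 2 := by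
    rcases eq_or_ne x 0 with rfl | hx
    · simp
    · field_simp
  have hz : z = ((a * ‖f‖ ^ 2 + k ^ 2 * x * ‖g‖ ^ 2 : ℝ) : ℂ)
      - q / (u - c) * ((x ^ 2 * ‖g‖ ^ 2 : ℝ) : ℂ) := by
    simp only [z]
    simp only [map_mul, conj_ofReal]
    push_cast
    linear_combination (a : ℂ) * mul_conj' f + ((k : ℂ) ^ 2 * x - q / (u - c) * x ^ 2) * mul_conj' g
  rw [hxg, hk, ← re_sub_mul_im_ofReal_div_sub q u α hc, hz]
  simp only [sub_re, sub_im, ofReal_re, ofReal_im, re_mul_ofReal, im_mul_ofReal]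
  ring

theorem stmt_6_general
    (ri ro : ℝ) (hri : 0 < ri) (hio : ri < ro)
    (N k : ℝ)
    (c : ℂ) (hc : c.im ≠ 0)
    (U Q : ℝ → ℝ)
    (G : ℝ → ℂ)
    (hG : ContDiffOn ℝ 2 G (Set.Icc ri ro))
    (hGi : G ri = 0) (hGo : G ro = 0)
    (heq : ∀ r ∈ Set.Icc ri ro,
      deriv (fun s : ℝ => ((s / (N ^ 2 + s ^ 2) : ℝ) : ℂ) *
          deriv (fun t : ℝ => (t : ℂ) * G t) s) r
        - (k : ℂ) ^ 2 * G r
        + ((deriv Q r : ℝ) : ℂ) / ((U r : ℂ) - c) * ((r : ℂ) * G r) = 0) :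
    ∀ α : ℝ,
      ∫ r in ri..ro,
        (r / (N ^ 2 + r ^ 2)) * ‖deriv (fun t : ℝ => (t : ℂ) * G t) r‖ ^ 2
          + (k ^ 2 / r) * ‖(r : ℂ) * G r‖ ^ 2
          - (deriv Q r * (U r - α) / ‖(U r : ℂ) - c‖ ^ 2)
              * ‖(r : ℂ) * G r‖ ^ 2 = 0 := by
  intro α
  set s := Icc ri ro
  set F : ℝ → ℂ := fun t => (t : ℂ) * G t
  set A : ℝ → ℂ := fun r => ((r / (N ^ 2 + r ^ 2) : ℝ) : ℂ)
  -- `derivWithin` rather than `deriv`, so that the flux is `C¹` up to the endpoints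
  set P : ℝ → ℂ := fun r => A r * derivWithin F s r
  have hF : ContDiffOn ℝ 2 F s := ofRealCLM.contDiff.contDiffOn.mul hG
  have hF₁ : ContDiffOn ℝ 1 F s := hF.of_le one_le_two
  have hA : ContDiffOn ℝ 1 A s := ofRealCLM.contDiff.comp_contDiffOn <|
    contDiffOn_id.div (contDiffOn_const.add (contDiffOn_id.pow 2)) fun r hr => by
      have := hri.trans_le hr.1; positivity
  have hP : ContDiffOn ℝ 1 P s := hA.mul (hF.derivWithin (uniqueDiffOn_Icc hio) (by norm_num))
  have hflux : ∀ x ∈ Ioo ri ro,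
      derivWithin P s x = k ^ 2 * G x - deriv Q x / (U x - c) * F x := by
    intro x hx
    have hPeq : P =ᶠ[𝓝 x] fun r => A r * deriv F r :=
      EventuallyEq.rfl.mul (derivWithin_Icc_eventuallyEq_deriv hx)
    rw [(derivWithin_Icc_eventuallyEq_deriv hx).self_of_nhds, hPeq.deriv_eq]
    linear_combination heq x (Ioo_subset_Icc_self hx)
  let L : ℂ →L[ℝ] ℝ := reCLM - ((α - c.re) / c.im) • imCLM
  calc _ = ∫ x in ri..ro,
        L (derivWithin P s x * conj (F x) + P x * conj (derivWithin F s x)) := by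
        refine intervalIntegral.integral_congr_Ioo_of_le hio.le fun x hx => ?_
        have hFx : derivWithin F s x = deriv F x :=
          (derivWithin_Icc_eventuallyEq_deriv hx).self_of_nhds
        simp only [L, hflux x hx, P, hFx]
        exact energy_integrand_eq_re_sub_mul_im k _ _ _ x α (G x) _ hc
    _ = 0 := by
        rw [L.intervalIntegral_comp_comm,
          integral_derivWithin_mul_conj_add_mul_conj_derivWithin_eq_zero hio hP hF₁
            (by simp [F, hGi]) (by simp [F, hGo]), map_zero]
        refine ContinuousOn.intervalIntegrable ?_
        rw [uIcc_of_le hio.le]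
        exact continuousOn_derivWithin_mul_conj_add_mul_conj_derivWithin hio hP hF₁

/-- Combined integral identity: for every real `α`, a suitable linear
combination of the real- and imaginary-part integral identities of the
Rayleigh-type equation vanishes. -/
theorem stmt_6
    (ri ro : ℝ) (hri : 0 < ri) (hio : ri < ro)
    (N k : ℝ) (hN : 0 ≤ N) (hk : 0 < k)
    (c : ℂ) (hc : c.im ≠ 0)
    (U Q : ℝ → ℝ)
    (hU : ContDiffOn ℝ 2 U (Set.Icc ri ro))
    (hQ : ∀ r, Q r = -(r * deriv U r) / (N ^ 2 + r ^ 2))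
    (G : ℝ → ℂ)
    (hG : ContDiffOn ℝ 2 G (Set.Icc ri ro))
    (hGi : G ri = 0) (hGo : G ro = 0)
    (heq : ∀ r ∈ Set.Icc ri ro,
      deriv (fun s : ℝ => ((s / (N ^ 2 + s ^ 2) : ℝ) : ℂ) *
          deriv (fun t : ℝ => (t : ℂ) * G t) s) r
        - (k : ℂ) ^ 2 * G r
        + ((deriv Q r : ℝ) : ℂ) / ((U r : ℂ) - c) * ((r : ℂ) * G r) = 0) :
    ∀ α : ℝ,
      ∫ r in ri..ro,
        (r / (N ^ 2 + r ^ 2)) * ‖deriv (fun t : ℝ => (t : ℂ) * G t) r‖ ^ 2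
          + (k ^ 2 / r) * ‖(r : ℂ) * G r‖ ^ 2
          - (deriv Q r * (U r - α) / ‖(U r : ℂ) - c‖ ^ 2)
              * ‖(r : ℂ) * G r‖ ^ 2 = 0 :=
  stmt_6_general ri ro hri hio N k c hc U Q G hG hGi hGo heq
end
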